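/- arXiv:1107.4677 — 3 statements merged into one kernel-verified Lean document; each statement's English description precedes it below -/
import Mathlib

section
/- Let c : ℕ → ℝ be finitely supported, m ≥ 1, λ an m-th root of unity with λ ≠ 1, and suppose ∑_i c_i i^k λ^i = 0 for all 0 ≤ k ≤ K. Then for each l with 0 ≤ l ≤ K, the polynomial function f(η) = ∑_i c_i i^l λ^i η^i (a finite sum over the support of c) vanishes to order at least K − l + 1 at η = 1; that is, f and its first K − l derivatives all vanish at η = 1. -/
/-!
The `j`-th derivative of `∑ aᵢ Xⁱ` at `1` is `∑ aᵢ i(i-1)⋯(i-j+1)`, i.e. the weighted sum of the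
values at `i` of the polynomial `descPochhammer j`. For `f` as in the theorem the weights are
`cᵢ ζⁱ` and the polynomial is `X^l * descPochhammer j`, of degree `l + j ≤ K`; expanding it in
monomials writes the sum as a combination of the vanishing moments `∑ cᵢ iᵏ ζⁱ`, `k ≤ K`.
-/

open Polynomial Finset

theorem sum_mul_eval_eq_zero_of_moments_eq_zero {R : Type*} [CommSemiring R] (s : Finset ℕ)
    (w : ℕ → R) (K : ℕ) (hw : ∀ k ≤ K, ∑ i ∈ s, w i * (i : R) ^ k = 0) {P : R[X]}
    (hP : P.natDegree ≤ K) :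
    ∑ i ∈ s, w i * P.eval (i : R) = 0 := by
  simp_rw [P.eval_eq_sum_range' (Nat.lt_succ_of_le hP), mul_sum]
  rw [sum_comm]
  refine sum_eq_zero fun k hk => ?_
  simp_rw [mul_left_comm (w _), ← mul_sum]
  rw [hw k (Nat.lt_succ_iff.mp (mem_range.mp hk)), mul_zero]

theorem eval_one_iterate_derivative_sum_C_mul_X_pow {R : Type*} [CommRing R] (s : Finset ℕ)
    (a : ℕ → R) (j : ℕ) :
    (derivative^[j] (∑ i ∈ s, C (a i) * X ^ i)).eval 1 =
      ∑ i ∈ s, a i * (descPochhammer R j).eval (i : R) := by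
  rw [iterate_derivative_sum, eval_finsetSum]
  refine sum_congr rfl fun i _ => ?_
  rw [iterate_derivative_C_mul, iterate_derivative_X_pow_eq_natCast_mul,
    descPochhammer_eval_eq_descFactorial]
  simp

theorem stmt2_general (c : ℕ →₀ ℝ) (K : ℕ) (ζ : ℂ)
    (hmom : ∀ k ≤ K, ∑ i ∈ c.support, (c i : ℂ) * (i : ℂ) ^ k * ζ ^ i = 0)
    (l : ℕ) (hl : l ≤ K) :
    ∀ j ≤ K - l,
      (Polynomial.derivative^[j]
        (∑ i ∈ c.support,
          Polynomial.C ((c i : ℂ) * (i : ℂ) ^ l * ζ ^ i) * Polynomial.X ^ i)).eval 1 = 0 := by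
  intro j hj
  have hdeg : (X ^ l * descPochhammer ℂ j).natDegree ≤ K := by
    rw [natDegree_mul (pow_ne_zero _ X_ne_zero) (monic_descPochhammer ℂ j).ne_zero,
      natDegree_X_pow, descPochhammer_natDegree]
    omega
  rw [eval_one_iterate_derivative_sum_C_mul_X_pow, ← sum_mul_eval_eq_zero_of_moments_eq_zero
    c.support (fun i => (c i : ℂ) * ζ ^ i) K (fun k hk => by simpa [mul_right_comm] using hmom k hk)
    hdeg]
  refine sum_congr rfl fun i _ => ?_
  simp only [eval_mul, eval_pow, eval_X]
  ring

theorem stmt2 (c : ℕ →₀ ℝ) (m K : ℕ) (hm : 1 ≤ m) (ζ : ℂ)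
    (hζ : ζ ^ m = 1) (hζ1 : ζ ≠ 1)
    (hmom : ∀ k ≤ K, ∑ i ∈ c.support, (c i : ℂ) * (i : ℂ) ^ k * ζ ^ i = 0)
    (l : ℕ) (hl : l ≤ K) :
    ∀ j ≤ K - l,
      (Polynomial.derivative^[j]
        (∑ i ∈ c.support,
          Polynomial.C ((c i : ℂ) * (i : ℂ) ^ l * ζ ^ i) * Polynomial.X ^ i)).eval 1 = 0 :=
  stmt2_general c K ζ hmom l hl
end

section
/- Let P : ℝ^k → ℝ be a polynomial of degree ≤ d and c > 0. For every derivative order r' ≥ 0 there exists C > 0 such that for all integers p ≥ 1 and all z ∈ ℝ^k, every partial derivative of order ≤ r' (in z) of the function z ↦ P(√p·z)·e^{−c·p·|z|²} is bounded in absolute value by C · p^{r'/2} · e^{−(c/2)·p·|z|²}. -/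
/-!
Write `F y = P(y) e^{-c‖y‖²}`, so that the function in question is `z ↦ F(√p • z)` and its `j`-th
derivative is `(√p)^j (D^j F)(√p • z)`. By Leibniz and Faà di Bruno, `D^j F` is bounded by a
polynomial in `‖y‖` times `e^{-c‖y‖²}`, and half of the Gaussian absorbs the polynomial:
`(1 + t)^m e^{-c t²} ≤ e^{m²/(2c)} e^{-(c/2) t²}`. Evaluating at `y = √p • z` gives the claim.
-/

open Function Real Finset
open scoped Nat

theorem MvPolynomial.hasTemperateGrowth_eval {E σ : Type*} [NormedAddCommGroup E]
    [NormedSpace ℝ E] {f : σ → E → ℝ}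
    (hf : ∀ i, (f i).HasTemperateGrowth) (P : MvPolynomial σ ℝ) :
    (fun x => MvPolynomial.eval (fun i => f i x) P).HasTemperateGrowth := by
  induction P using MvPolynomial.induction_on with
  | C a => simpa only [MvPolynomial.eval_C] using HasTemperateGrowth.const a
  | add P Q hP hQ => simpa only [map_add] using hP.fun_add hQ
  | mul_X P i hP => simpa only [map_mul, MvPolynomial.eval_X] using hP.fun_mul (hf i)

theorem one_add_pow_mul_exp_neg_mul_sq_le {c : ℝ} (hc : 0 < c) (m : ℕ) {t : ℝ} (ht : 0 ≤ t) :
    (1 + t) ^ m * exp (-c * t ^ 2) ≤ exp (m ^ 2 / (2 * c)) * exp (-(c / 2) * t ^ 2) := by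
  have hpow : (1 + t) ^ m ≤ exp (m * t) := by
    rw [exp_nat_mul]
    exact pow_le_pow_left₀ (by linarith) (by linarith [add_one_le_exp t]) m
  -- `m t - c t² ≤ m²/(2c) - (c/2) t²` is `(m - c t)² ≥ 0`
  have hexp : m * t + -c * t ^ 2 ≤ m ^ 2 / (2 * c) + -(c / 2) * t ^ 2 := by
    rw [div_add' _ _ _ (by positivity), le_div_iff₀ (by positivity)]
    nlinarith [sq_nonneg (c * t - m)]
  calc (1 + t) ^ m * exp (-c * t ^ 2) ≤ exp (m * t) * exp (-c * t ^ 2) := by gcongr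
    _ ≤ exp (m ^ 2 / (2 * c)) * exp (-(c / 2) * t ^ 2) := by
      rw [← exp_add, ← exp_add]
      exact exp_le_exp.mpr hexp

section InnerProductSpace

variable {E : Type*} [NormedAddCommGroup E] [InnerProductSpace ℝ E]

theorem norm_iteratedFDeriv_exp_mul_norm_sq_le (a : ℝ) (n : ℕ) :
    ∃ (m : ℕ) (C : ℝ), 0 ≤ C ∧ ∀ i ≤ n, ∀ x : E,
      ‖iteratedFDeriv ℝ i (fun y => exp (a * ‖y‖ ^ 2)) x‖ ≤
        C * (1 + ‖x‖) ^ m * exp (a * ‖x‖ ^ 2) := by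
  have hq := hasTemperateGrowth_norm_sq E
  obtain ⟨k, B, hB, hq_le⟩ := hq.norm_iteratedFDeriv_le_uniform n
  refine ⟨k * n, n ! * max 1 |a| ^ n * (B + 1) ^ n, by positivity, fun i hi x => ?_⟩
  set D := (B + 1) * (1 + ‖x‖) ^ k
  have hD : 1 ≤ D :=
    one_le_mul_of_one_le_of_one_le (by linarith) (one_le_pow₀ (by linarith [norm_nonneg x]))
  have hexp_le : ∀ j ≤ i, ‖iteratedFDeriv ℝ j (fun t => exp (a * t)) (‖x‖ ^ 2)‖ ≤
      max 1 |a| ^ n * exp (a * ‖x‖ ^ 2) := by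
    intro j hj
    rw [norm_iteratedFDeriv_eq_norm_iteratedDeriv, iteratedDeriv_exp_const_mul, norm_mul,
      norm_pow, norm_of_nonneg (exp_pos _).le]
    gcongr
    calc ‖a‖ ^ j ≤ max 1 |a| ^ j := by gcongr; exact le_max_right _ _
      _ ≤ max 1 |a| ^ n := pow_le_pow_right₀ (le_max_left _ _) (hj.trans hi)
  have hq_le' : ∀ j, 1 ≤ j → j ≤ i → ‖iteratedFDeriv ℝ j (fun y : E => ‖y‖ ^ 2) x‖ ≤ D ^ j :=
    fun j hj hji => calc
      _ ≤ B * (1 + ‖x‖) ^ k := hq_le j (hji.trans hi) x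
      _ ≤ D := mul_le_mul_of_nonneg_right (by linarith) (by positivity)
      _ ≤ D ^ j := le_self_pow₀ hD (by omega)
  calc ‖iteratedFDeriv ℝ i ((fun t => exp (a * t)) ∘ fun y : E => ‖y‖ ^ 2) x‖
      ≤ i ! * (max 1 |a| ^ n * exp (a * ‖x‖ ^ 2)) * D ^ i :=
        norm_iteratedFDeriv_comp_le (by fun_prop) hq.1 (mod_cast le_top) x hexp_le hq_le'
    _ ≤ n ! * (max 1 |a| ^ n * exp (a * ‖x‖ ^ 2)) * D ^ n := by
        gcongr
    _ = n ! * max 1 |a| ^ n * (B + 1) ^ n * (1 + ‖x‖) ^ (k * n) * exp (a * ‖x‖ ^ 2) := by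
        rw [mul_pow, ← pow_mul]; ring

namespace Function.HasTemperateGrowth

theorem norm_iteratedFDeriv_mul_exp_mul_norm_sq_le {f : E → ℝ} (hf : f.HasTemperateGrowth)
    (a : ℝ) (n : ℕ) :
    ∃ (m : ℕ) (C : ℝ), 0 ≤ C ∧ ∀ j ≤ n, ∀ x : E,
      ‖iteratedFDeriv ℝ j (fun y => f y * exp (a * ‖y‖ ^ 2)) x‖ ≤
        C * (1 + ‖x‖) ^ m * exp (a * ‖x‖ ^ 2) := by
  obtain ⟨k, A, hA, hf_le⟩ := hf.norm_iteratedFDeriv_le_uniform n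
  obtain ⟨m, B, hB, hg_le⟩ := norm_iteratedFDeriv_exp_mul_norm_sq_le (E := E) a n
  refine ⟨k + m, 2 ^ n * A * B, by positivity, fun j hj x => ?_⟩
  set bound := A * B * (1 + ‖x‖) ^ (k + m) * exp (a * ‖x‖ ^ 2)
  have hterm : ∀ i ∈ range (j + 1), (j.choose i : ℝ) * ‖iteratedFDeriv ℝ i f x‖ *
      ‖iteratedFDeriv ℝ (j - i) (fun y => exp (a * ‖y‖ ^ 2)) x‖ ≤ j.choose i * bound := by
    intro i hi
    have hij : i ≤ j := Nat.lt_succ_iff.mp (mem_range.mp hi)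
    rw [mul_assoc]
    gcongr
    calc _ ≤ A * (1 + ‖x‖) ^ k * (B * (1 + ‖x‖) ^ m * exp (a * ‖x‖ ^ 2)) :=
          mul_le_mul (hf_le i (hij.trans hj) x) (hg_le (j - i) (by omega) x) (norm_nonneg _)
            (by positivity)
      _ = bound := by simp only [bound, pow_add]; ring
  calc _ ≤ ∑ i ∈ range (j + 1), (j.choose i : ℝ) * ‖iteratedFDeriv ℝ i f x‖ *
        ‖iteratedFDeriv ℝ (j - i) (fun y => exp (a * ‖y‖ ^ 2)) x‖ :=
        norm_iteratedFDeriv_mul_le hf.1 (contDiff_const.mul (contDiff_norm_sq ℝ)).exp x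
          (mod_cast le_top)
    _ ≤ ∑ i ∈ range (j + 1), (j.choose i : ℝ) * bound := sum_le_sum hterm
    _ = 2 ^ j * bound := by rw [← sum_mul, ← Nat.cast_sum, Nat.sum_range_choose, Nat.cast_pow,
          Nat.cast_ofNat]
    _ ≤ 2 ^ n * bound := by gcongr; norm_num
    _ = 2 ^ n * A * B * (1 + ‖x‖) ^ (k + m) * exp (a * ‖x‖ ^ 2) := by ring

theorem norm_iteratedFDeriv_mul_gaussian_le {f : E → ℝ} (hf : f.HasTemperateGrowth)
    {c : ℝ} (hc : 0 < c) (n : ℕ) :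
    ∃ C > 0, ∀ j ≤ n, ∀ x : E,
      ‖iteratedFDeriv ℝ j (fun y => f y * exp (-c * ‖y‖ ^ 2)) x‖ ≤
        C * exp (-(c / 2) * ‖x‖ ^ 2) := by
  obtain ⟨m, A, hA, hle⟩ := hf.norm_iteratedFDeriv_mul_exp_mul_norm_sq_le (-c) n
  refine ⟨A * exp (m ^ 2 / (2 * c)) + 1, by positivity, fun j hj x => ?_⟩
  calc _ ≤ A * ((1 + ‖x‖) ^ m * exp (-c * ‖x‖ ^ 2)) := (hle j hj x).trans_eq (by ring)
    _ ≤ A * (exp (m ^ 2 / (2 * c)) * exp (-(c / 2) * ‖x‖ ^ 2)) := by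
        gcongr ?_ * ?_; exact one_add_pow_mul_exp_neg_mul_sq_le hc m (norm_nonneg x)
    _ ≤ (A * exp (m ^ 2 / (2 * c)) + 1) * exp (-(c / 2) * ‖x‖ ^ 2) := by
        nlinarith [exp_pos (-(c / 2) * ‖x‖ ^ 2)]

end Function.HasTemperateGrowth

end InnerProductSpace

theorem stmt8_general (k : ℕ) (P : MvPolynomial (Fin k) ℝ)
    (c : ℝ) (hc : 0 < c) (r' : ℕ) :
    ∃ C > 0, ∀ p : ℕ, 1 ≤ p → ∀ z : EuclideanSpace ℝ (Fin k), ∀ j ≤ r',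
      ‖iteratedFDeriv ℝ j
          (fun w : EuclideanSpace ℝ (Fin k) =>
            MvPolynomial.eval (fun a => Real.sqrt p * w a) P *
              Real.exp (-c * p * ‖w‖ ^ 2)) z‖ ≤
        C * (p : ℝ) ^ ((r' : ℝ) / 2) * Real.exp (-(c / 2) * p * ‖z‖ ^ 2) := by
  have hP := MvPolynomial.hasTemperateGrowth_eval
    (fun i => (EuclideanSpace.proj i : EuclideanSpace ℝ (Fin k) →L[ℝ] ℝ).hasTemperateGrowth) P
  obtain ⟨C, hC, hbound⟩ := hP.norm_iteratedFDeriv_mul_gaussian_le hc r'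
  refine ⟨C, hC, fun p hp z j hj => ?_⟩
  set F := fun y : EuclideanSpace ℝ (Fin k) =>
    MvPolynomial.eval (fun i => y i) P * exp (-c * ‖y‖ ^ 2)
  have hp0 : (0 : ℝ) ≤ p := p.cast_nonneg
  have hnorm_smul : ∀ w : EuclideanSpace ℝ (Fin k), ‖√p • w‖ ^ 2 = p * ‖w‖ ^ 2 := fun w => by
    rw [norm_smul, mul_pow, norm_of_nonneg (sqrt_nonneg _), sq_sqrt hp0]
  have hscale : (fun w : EuclideanSpace ℝ (Fin k) =>
      MvPolynomial.eval (fun a => √p * w a) P * exp (-c * p * ‖w‖ ^ 2)) =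
      fun w => F (√p • w) := by
    funext w
    simp only [F, hnorm_smul, PiLp.smul_apply, smul_eq_mul, mul_assoc]
  have hF : ContDiff ℝ j F :=
    (hP.1.mul (contDiff_const.mul (contDiff_norm_sq ℝ)).exp).of_le (mod_cast le_top)
  have hsqrt : √(p : ℝ) ^ j ≤ (p : ℝ) ^ ((r' : ℝ) / 2) := by
    rw [sqrt_eq_rpow, ← rpow_natCast, ← rpow_mul hp0, mul_comm, ← div_eq_mul_one_div]
    exact rpow_le_rpow_of_exponent_le (by exact_mod_cast hp) (by gcongr)
  rw [hscale, iteratedFDeriv_comp_const_smul _ hF, norm_smul, norm_pow,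
    norm_of_nonneg (sqrt_nonneg _)]
  calc √p ^ j * ‖iteratedFDeriv ℝ j F (√p • z)‖
      ≤ (p : ℝ) ^ ((r' : ℝ) / 2) * (C * exp (-(c / 2) * ‖√p • z‖ ^ 2)) := by
        gcongr; exact hbound j hj _
    _ = C * (p : ℝ) ^ ((r' : ℝ) / 2) * exp (-(c / 2) * p * ‖z‖ ^ 2) := by
        rw [hnorm_smul, mul_assoc (-(c / 2))]; ring

theorem stmt8 (k d : ℕ) (P : MvPolynomial (Fin k) ℝ) (hdeg : P.totalDegree ≤ d)
    (c : ℝ) (hc : 0 < c) (r' : ℕ) :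
    ∃ C > 0, ∀ p : ℕ, 1 ≤ p → ∀ z : EuclideanSpace ℝ (Fin k), ∀ j ≤ r',
      ‖iteratedFDeriv ℝ j
          (fun w : EuclideanSpace ℝ (Fin k) =>
            MvPolynomial.eval (fun a => Real.sqrt p * w a) P *
              Real.exp (-c * p * ‖w‖ ^ 2)) z‖ ≤
        C * (p : ℝ) ^ ((r' : ℝ) / 2) * Real.exp (-(c / 2) * p * ‖z‖ ^ 2) :=
  stmt8_general k P c hc r'
end

section
/- Suppose c : ℕ → ℝ is finitely supported, m ≥ 1, and λ is an m-th root of unity with λ ≠ 1, and assume ∑_i c_i i^k λ^i = 0 for 0 ≤ k ≤ K. Fix 0 ≤ l ≤ K and a function η = η(z) taking values in (0,1] with 1 − η(z) ≥ c₀|z|² for some c₀ > 0, on |z| ≤ ε. Then there is C > 0 such that for all integers p ≥ 1 and |z| ≤ ε: |∑_i c_i i^l λ^{i} η(z)^{p+i}| ≤ C · p^{l − K − 1} · η(z)^{3p/4}. -/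
/-!
Put `g(X) = ∑ cᵢ iˡ ζⁱ Xⁱ`. Its `j`-th derivative at `1` is the moment `∑ cᵢ ζⁱ Q(i)` of
`Q = Xˡ (X)ⱼ`, a polynomial of degree `l + j`, so it vanishes for `j ≤ K - l`. Hence
`(X - 1)^(K-l+1)` divides `g`, and `‖g(x)‖ ≤ M (1 - x)^(K-l+1)` on `[0, 1]`. The sum is `xᵖ g(x)`
with `x = η(z)`; splitting `xᵖ = x^(3p/4) x^(p/4)`, the bounds `x^(p/4) ≤ exp (-(p/4)(1 - x))` and
`tˢ ≤ s! eᵗ` give `x^(p/4) (1 - x)ˢ ≤ s! (4/p)ˢ`.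
-/

open Polynomial Finset Real
open scoped Nat

theorem Polynomial.pow_dvd_of_isRoot_iterate_derivative {R : Type*} [CommRing R] [IsDomain R]
    [CharZero R] {p : R[X]} {t : R} {n : ℕ} (hroot : ∀ m ≤ n, (derivative^[m] p).IsRoot t) :
    (X - C t) ^ (n + 1) ∣ p := by
  rcases eq_or_ne p 0 with rfl | hp
  · exact dvd_zero _
  exact (pow_dvd_pow _ (lt_rootMultiplicity_of_isRoot_iterate_derivative hp hroot)).trans
    (pow_rootMultiplicity_dvd p t)

section Moments

variable {R : Type*} [CommRing R] (S : Finset ℕ)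

theorem sum_mul_eval_eq_zero_of_moments_eq_zero_s9 {w : ℕ → R} {K : ℕ}
    (hmom : ∀ k ≤ K, ∑ i ∈ S, w i * (i : R) ^ k = 0) {Q : R[X]} (hQ : Q.natDegree ≤ K) :
    ∑ i ∈ S, w i * Q.eval (i : R) = 0 := by
  simp_rw [eval_eq_sum_range' (Nat.lt_succ_of_le hQ), mul_sum]
  rw [sum_comm]
  refine sum_eq_zero fun k hk => ?_
  simp_rw [mul_left_comm (w _), ← mul_sum]
  rw [hmom k (Nat.lt_succ_iff.mp (mem_range.mp hk)), mul_zero]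

noncomputable def generatingPoly (a : ℕ → R) : R[X] :=
  ∑ i ∈ S, C (a i) * X ^ i

theorem eval_generatingPoly (a : ℕ → R) (x : R) :
    (generatingPoly S a).eval x = ∑ i ∈ S, a i * x ^ i := by
  simp [generatingPoly, eval_finsetSum]

theorem eval_one_iterate_derivative_generatingPoly (a : ℕ → R) (j : ℕ) :
    (derivative^[j] (generatingPoly S a)).eval 1 = ∑ i ∈ S, a i * (i.descFactorial j : R) := by
  simp [generatingPoly, iterate_derivative_sum, iterate_derivative_C_mul,
    iterate_derivative_X_pow_eq_C_mul, eval_finsetSum]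

theorem pow_dvd_generatingPoly_of_moments_eq_zero [IsDomain R] [CharZero R] {w : ℕ → R}
    {K l : ℕ} (hmom : ∀ k ≤ K, ∑ i ∈ S, w i * (i : R) ^ k = 0) (hl : l ≤ K) :
    (X - 1 : R[X]) ^ (K - l + 1) ∣ generatingPoly S (fun i => w i * (i : R) ^ l) := by
  rw [← C_1]
  refine pow_dvd_of_isRoot_iterate_derivative fun j hj => ?_
  have hdeg : (X ^ l * descPochhammer R j).natDegree ≤ K := by
    rw [natDegree_mul (pow_ne_zero _ X_ne_zero) (monic_descPochhammer R j).ne_zero,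
      natDegree_X_pow, descPochhammer_natDegree]
    omega
  rw [IsRoot, eval_one_iterate_derivative_generatingPoly,
    ← sum_mul_eval_eq_zero_of_moments_eq_zero_s9 S hmom hdeg]
  simp [descPochhammer_eval_eq_descFactorial, mul_assoc]

end Moments

theorem exists_norm_eval_le_of_pow_dvd {g : ℂ[X]} {s : ℕ} (hg : (X - 1) ^ s ∣ g) :
    ∃ M > 0, ∀ x ∈ Set.Icc (0 : ℝ) 1, ‖g.eval (x : ℂ)‖ ≤ M * (1 - x) ^ s := by
  obtain ⟨h, rfl⟩ := hg
  obtain ⟨M, hM⟩ := isCompact_Icc.exists_bound_of_continuousOn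
    (h.continuous.comp Complex.continuous_ofReal).continuousOn
  refine ⟨max M 1, by positivity, fun x hx => ?_⟩
  have hx1 : ‖(x : ℂ) - 1‖ = 1 - x := by
    rw [← Complex.ofReal_one, ← Complex.ofReal_sub, Complex.norm_real, Real.norm_eq_abs,
      abs_of_nonpos (by linarith [hx.2])]
    ring
  rw [eval_mul, eval_pow, eval_sub, eval_X, eval_one, norm_mul, norm_pow, hx1, mul_comm]
  exact mul_le_mul_of_nonneg_right ((hM x hx).trans (le_max_left _ _))
    (pow_nonneg (by linarith [hx.2]) s)

theorem rpow_mul_one_sub_pow_le {x a : ℝ} (hx0 : 0 ≤ x) (hx1 : x ≤ 1) (ha : 0 < a) (s : ℕ) :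
    x ^ a * (1 - x) ^ s ≤ s ! / a ^ s := by
  have hxa : x ^ a ≤ exp (-(a * (1 - x))) := by
    calc x ^ a ≤ exp (x - 1) ^ a := rpow_le_rpow hx0 (by linarith [add_one_le_exp (x - 1)]) ha.le
      _ = exp (-(a * (1 - x))) := by rw [← exp_mul]; ring_nf
  have hpow : (1 - x) ^ s ≤ s ! / a ^ s * exp (a * (1 - x)) := by
    have := pow_div_factorial_le_exp _ (mul_nonneg ha.le (sub_nonneg.2 hx1)) s
    rw [div_le_iff₀ (by positivity), mul_pow] at this
    rw [div_mul_eq_mul_div, le_div_iff₀ (by positivity)]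
    linarith
  calc x ^ a * (1 - x) ^ s ≤ exp (-(a * (1 - x))) * (s ! / a ^ s * exp (a * (1 - x))) :=
        mul_le_mul hxa hpow (by positivity) (by positivity)
    _ = s ! / a ^ s := by rw [mul_left_comm, ← exp_add, neg_add_cancel, exp_zero, mul_one]

theorem pow_mul_one_sub_pow_le {x : ℝ} (hx0 : 0 ≤ x) (hx1 : x ≤ 1) {p : ℕ} (hp : 1 ≤ p) (s : ℕ) :
    x ^ p * (1 - x) ^ s ≤ s ! * 4 ^ s * (p : ℝ) ^ (-(s : ℝ)) * x ^ (3 * (p : ℝ) / 4) := by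
  have hp0 : (0 : ℝ) < p := by exact_mod_cast hp
  have hsplit : x ^ p = x ^ (3 * (p : ℝ) / 4) * x ^ ((p : ℝ) / 4) := by
    rw [← rpow_add' hx0 (by positivity), ← rpow_natCast]; ring_nf
  have hconst : (s ! : ℝ) / ((p : ℝ) / 4) ^ s = s ! * 4 ^ s * (p : ℝ) ^ (-(s : ℝ)) := by
    rw [rpow_neg hp0.le, rpow_natCast, div_pow]; field_simp
  rw [hsplit, mul_assoc, mul_comm _ (x ^ (3 * (p : ℝ) / 4)), ← hconst]
  exact mul_le_mul_of_nonneg_left (rpow_mul_one_sub_pow_le hx0 hx1 (by positivity) s)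
    (by positivity)

theorem stmt9_general (c : ℕ →₀ ℝ) (K : ℕ) (ζ : ℂ)
    (hmom : ∀ k ≤ K, ∑ i ∈ c.support, (c i : ℂ) * (i : ℂ) ^ k * ζ ^ i = 0)
    (l : ℕ) (hl : l ≤ K)
    (n : ℕ) (η : EuclideanSpace ℂ (Fin n) → ℝ) (ε c₀ : ℝ)
    (hη : ∀ z, ‖z‖ ≤ ε → 0 < η z ∧ η z ≤ 1 ∧ c₀ * ‖z‖ ^ 2 ≤ 1 - η z) :
    ∃ C > 0, ∀ p : ℕ, 1 ≤ p → ∀ z, ‖z‖ ≤ ε →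
      ‖∑ i ∈ c.support, (c i : ℂ) * (i : ℂ) ^ l * ζ ^ i * (η z : ℂ) ^ (p + i)‖ ≤
        C * (p : ℝ) ^ ((l : ℝ) - K - 1) * η z ^ ((3 * (p : ℝ)) / 4) := by
  set s := K - l + 1
  set w : ℕ → ℂ := fun i => c i * ζ ^ i
  have hdvd := pow_dvd_generatingPoly_of_moments_eq_zero c.support (w := w) (l := l)
    (fun k hk => by simpa only [w, mul_right_comm _ (ζ ^ _)] using hmom k hk) hl
  obtain ⟨M, hM, hbound⟩ := exists_norm_eval_le_of_pow_dvd hdvd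
  refine ⟨M * (s ! * 4 ^ s), by positivity, fun p hp z hz => ?_⟩
  obtain ⟨hx0, hx1, -⟩ := hη z hz
  set x := η z
  have hsum : ∑ i ∈ c.support, (c i : ℂ) * (i : ℂ) ^ l * ζ ^ i * (x : ℂ) ^ (p + i) =
      (x : ℂ) ^ p * (generatingPoly c.support fun i => w i * (i : ℂ) ^ l).eval (x : ℂ) := by
    rw [eval_generatingPoly, mul_sum]
    exact sum_congr rfl fun i _ => by rw [pow_add]; ring
  have hexp : (l : ℝ) - K - 1 = -(s : ℝ) := by simp only [s]; push_cast [Nat.cast_sub hl]; ring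
  rw [hsum, norm_mul, norm_pow, Complex.norm_real, norm_of_nonneg hx0.le, hexp]
  calc x ^ p * ‖_‖ ≤ x ^ p * (M * (1 - x) ^ s) :=
        mul_le_mul_of_nonneg_left (hbound x ⟨hx0.le, hx1⟩) (by positivity)
    _ = M * (x ^ p * (1 - x) ^ s) := by ring
    _ ≤ M * (s ! * 4 ^ s * (p : ℝ) ^ (-(s : ℝ)) * x ^ (3 * (p : ℝ) / 4)) :=
        mul_le_mul_of_nonneg_left (pow_mul_one_sub_pow_le hx0.le hx1 hp s) hM.le
    _ = _ := by ring

theorem stmt9 (c : ℕ →₀ ℝ) (m K : ℕ) (hm : 1 ≤ m) (ζ : ℂ)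
    (hζ : ζ ^ m = 1) (hζ1 : ζ ≠ 1)
    (hmom : ∀ k ≤ K, ∑ i ∈ c.support, (c i : ℂ) * (i : ℂ) ^ k * ζ ^ i = 0)
    (l : ℕ) (hl : l ≤ K)
    (n : ℕ) (η : EuclideanSpace ℂ (Fin n) → ℝ) (ε c₀ : ℝ) (hε : 0 < ε) (hc₀ : 0 < c₀)
    (hη : ∀ z, ‖z‖ ≤ ε → 0 < η z ∧ η z ≤ 1 ∧ c₀ * ‖z‖ ^ 2 ≤ 1 - η z) :
    ∃ C > 0, ∀ p : ℕ, 1 ≤ p → ∀ z, ‖z‖ ≤ ε →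
      ‖∑ i ∈ c.support, (c i : ℂ) * (i : ℂ) ^ l * ζ ^ i * (η z : ℂ) ^ (p + i)‖ ≤
        C * (p : ℝ) ^ ((l : ℝ) - K - 1) * η z ^ ((3 * (p : ℝ)) / 4) :=
  stmt9_general c K ζ hmom l hl n η ε c₀ hη
end
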